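/- Every finite stratified ground normal logic program has at least one stable model. -/

import Mathlib

namespace ASP

/-- A ground normal rule: a head atom, a finite set of positive body atoms,
and a finite set of negated body atoms. -/
structure Rule (α : Type) where
  head : α
  pos : Finset α
  neg : Finset α
deriving DecidableEq

variable {α : Type}

/-- An interpretation `M` satisfies a rule `r` if `head r ∈ M` whenever
`pos r ⊆ M` and `neg r ∩ M = ∅`. -/
def ruleSat (M : Set α) (r : Rule α) : Prop :=
  ((↑r.pos : Set α) ⊆ M ∧ ∀ a ∈ r.neg, a ∉ M) → r.head ∈ M

/-- `M` is a model of a program if it satisfies every rule. -/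
def isModel (M : Set α) (P : Set (Rule α)) : Prop :=
  ∀ r ∈ P, ruleSat M r

/-- A definite program has no negated body atoms. -/
def isDefinite (P : Set (Rule α)) : Prop :=
  ∀ r ∈ P, r.neg = ∅

/-- The reduct `P^M`: the definite program
`{(head r, pos r, ∅) : r ∈ P, neg r ∩ M = ∅}`. -/
def reduct (P : Set (Rule α)) (M : Set α) : Set (Rule α) :=
  {r' | ∃ r ∈ P, (∀ a ∈ r.neg, a ∉ M) ∧ r' = ⟨r.head, r.pos, ∅⟩}

/-- `M` is the least model of `P`: a model contained in every model of `P`. -/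
def isLeastModel (M : Set α) (P : Set (Rule α)) : Prop :=
  isModel M P ∧ ∀ M', isModel M' P → M ⊆ M'

/-- `M` is a stable model (answer set) of `P` if `M` is the least model of
the reduct `P^M`. -/
def isStable (M : Set α) (P : Set (Rule α)) : Prop :=
  isLeastModel M (reduct P M)

/-- A program is stratified if there is a stratification function `s` on atoms. -/
def isStratified (P : Set (Rule α)) : Prop :=
  ∃ s : α → ℕ, ∀ r ∈ P,
    (∀ a ∈ r.pos, s a ≤ s r.head) ∧ (∀ a ∈ r.neg, s a < s r.head)

/-- `P ⊢ a` : atom `a` belongs to every stable model of `P`. -/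
def entails (P : Set (Rule α)) (a : α) : Prop :=
  ∀ M, isStable M P → a ∈ M

/-- `H1 ≤ H2` for finite ground programs: there is an injective map `f` from the
rules of `H1` to the rules of `H2` preserving heads and (weakly) enlarging bodies. -/
def progLE (H1 H2 : Finset (Rule α)) : Prop :=
  ∃ f : Rule α → Rule α, Set.InjOn f ↑H1 ∧
    ∀ r ∈ H1, f r ∈ H2 ∧ (f r).head = r.head ∧ r.pos ⊆ (f r).pos ∧ r.neg ⊆ (f r).neg

/-- `H1 < H2` iff `H1 ≤ H2` and `H1 ≠ H2`. -/
def progLT (H1 H2 : Finset (Rule α)) : Prop :=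
  progLE H1 H2 ∧ H1 ≠ H2

/-- A context-dependent example: an observation program `obs` together with finite
sets of positive and negative example atoms. -/
structure ILPExample (α : Type) where
  obs : Set (Rule α)
  epos : Finset α
  eneg : Finset α

/-- `H` covers example `E` (relative to background `B`): every positive example atom
belongs to every stable model of `B ∪ O ∪ H`, and no negative example atom does. -/
def covers (B : Set (Rule α)) (H : Finset (Rule α)) (E : ILPExample α) : Prop :=
  (∀ a ∈ E.epos, entails (B ∪ E.obs ∪ ↑H) a) ∧
  (∀ a ∈ E.eneg, ¬ entails (B ∪ E.obs ∪ ↑H) a)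

/-- `H` is a solution of the ILP task for distinct examples `(B, L, Es)`. -/
def isSolution (B L : Set (Rule α)) (Es : List (ILPExample α))
    (H : Finset (Rule α)) : Prop :=
  (↑H : Set (Rule α)) ⊆ L ∧ ∀ E ∈ Es, covers B H E

/-- A solution `H` is minimal if no solution `H'` satisfies `H' < H`. -/
def isMinimalSolution (B L : Set (Rule α)) (Es : List (ILPExample α))
    (H : Finset (Rule α)) : Prop :=
  isSolution B L Es H ∧ ¬∃ H', isSolution B L Es H' ∧ progLT H' H

/-! Build the stable model stratum by stratum. If `M` is a stable model of the rules whose heads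
lie below stratum `n`, then the least model `M'` of the reduct of the rules below `n + 1` with
respect to `M` is stable for them: least models of positively stratified definite programs split
along the strata, so `M'` agrees with `M` below `n`, and the negative bodies of rules below
`n + 1` only mention atoms below `n`, so the reduct with respect to `M'` is the one with respect
to `M`. Since `P` is finite, some stratum contains all of its rules. -/

def leastModel (P : Set (Rule α)) : Set α := {x | ∀ M, isModel M P → x ∈ M}

def isStratification (s : α → ℕ) (P : Set (Rule α)) : Prop :=
  ∀ r ∈ P, (∀ a ∈ r.pos, s a ≤ s r.head) ∧ (∀ a ∈ r.neg, s a < s r.head)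

def lowerStratum (P : Set (Rule α)) (s : α → ℕ) (n : ℕ) : Set (Rule α) :=
  {r ∈ P | s r.head < n}

section LeastModel

variable {P Q : Set (Rule α)} {M : Set α}

lemma isModel.mono (hQ : isModel M Q) (hPQ : P ⊆ Q) : isModel M P :=
  fun r hr => hQ r (hPQ hr)

lemma leastModel_subset (hM : isModel M P) : leastModel P ⊆ M :=
  fun _ hx => hx M hM

lemma leastModel_mono (hPQ : P ⊆ Q) : leastModel P ⊆ leastModel Q :=
  fun _ hx M hM => hx M (hM.mono hPQ)

lemma isModel_leastModel (hP : isDefinite P) : isModel (leastModel P) P := by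
  intro r hr hbody M hM
  exact hM r hr ⟨fun a ha => hbody.1 ha M hM, by simp [hP r hr]⟩

lemma isLeastModel_leastModel (hP : isDefinite P) : isLeastModel (leastModel P) P :=
  ⟨isModel_leastModel hP, fun _ => leastModel_subset⟩

lemma isLeastModel.eq_leastModel (hM : isLeastModel M P) : M = leastModel P :=
  subset_antisymm (fun _ hx M' hM' => hM.2 M' hM' hx) (leastModel_subset hM.1)

end LeastModel

section Reduct

variable {P : Set (Rule α)} {M M' : Set α}

lemma isDefinite_reduct : isDefinite (reduct P M) := by
  rintro _ ⟨r, -, -, rfl⟩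
  rfl

lemma reduct_congr (h : ∀ r ∈ P, ∀ a ∈ r.neg, (a ∈ M ↔ a ∈ M')) :
    reduct P M = reduct P M' := by
  ext r'
  constructor <;> rintro ⟨r, hr, hneg, rfl⟩ <;> refine ⟨r, hr, fun a ha => ?_, rfl⟩
  · exact (h r hr a ha).not.1 (hneg a ha)
  · exact (h r hr a ha).not.2 (hneg a ha)

lemma isStratification.reduct {s : α → ℕ} (hs : isStratification s P) :
    isStratification s (reduct P M) := by
  rintro _ ⟨r, hr, -, rfl⟩
  exact ⟨(hs r hr).1, by simp⟩

end Reduct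

section LowerStratum

variable {P : Set (Rule α)} {s : α → ℕ}

lemma lowerStratum_lowerStratum_succ (n : ℕ) :
    lowerStratum (lowerStratum P s (n + 1)) s n = lowerStratum P s n := by
  ext r
  exact ⟨fun h => ⟨h.1.1, h.2⟩, fun h => ⟨⟨h.1, h.2.trans n.lt_succ_self⟩, h.2⟩⟩

lemma reduct_lowerStratum (M : Set α) (n : ℕ) :
    reduct (lowerStratum P s n) M = lowerStratum (reduct P M) s n := by
  ext r'
  constructor
  · rintro ⟨r, ⟨hr, hn⟩, hneg, rfl⟩
    exact ⟨⟨r, hr, hneg, rfl⟩, hn⟩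
  · rintro ⟨⟨r, hr, hneg, rfl⟩, hn⟩
    exact ⟨r, ⟨hr, hn⟩, hneg, rfl⟩

lemma leastModel_lowerStratum_subset (n : ℕ) :
    leastModel (lowerStratum P s n) ⊆ {x | s x < n} :=
  leastModel_subset fun _ hr _ => hr.2

/-- Splitting: an atom below stratum `n` is derived only by rules with heads below `n`. -/
lemma leastModel_lowerStratum (hP : isDefinite P) (hs : isStratification s P) (n : ℕ) :
    leastModel (lowerStratum P s n) = leastModel P ∩ {x | s x < n} := by
  refine subset_antisymm (Set.subset_inter (leastModel_mono fun r hr => hr.1)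
    (leastModel_lowerStratum_subset n)) ?_
  have hlow : isDefinite (lowerStratum P s n) := fun r hr => hP r hr.1
  suffices hmodel : isModel (leastModel (lowerStratum P s n) ∪ {x | n ≤ s x}) P by
    rintro x ⟨hx, hxn⟩
    exact (leastModel_subset hmodel hx).resolve_right (Nat.not_le.2 hxn)
  intro r hr hbody
  by_cases hn : s r.head < n
  · refine Or.inl (isModel_leastModel hlow r ⟨hr, hn⟩ ⟨fun a ha => ?_, by simp [hP r hr]⟩)
    exact (hbody.1 ha).resolve_right (Nat.not_le.2 (((hs r hr).1 a ha).trans_lt hn))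
  · exact Or.inr (Nat.le_of_not_lt hn)

lemma lowerStratum_eq_self {n : ℕ} (h : ∀ r ∈ P, s r.head < n) : lowerStratum P s n = P :=
  Set.sep_eq_self_iff_mem_true.2 h

end LowerStratum

section Stratified

variable {P : Set (Rule α)} {s : α → ℕ}

lemma isStable_lowerStratum_succ (hs : isStratification s P) {n : ℕ} {M : Set α}
    (hM : isStable M (lowerStratum P s n)) :
    isStable (leastModel (reduct (lowerStratum P s (n + 1)) M)) (lowerStratum P s (n + 1)) := by
  set Pn := lowerStratum P s (n + 1)
  set M' := leastModel (reduct Pn M)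
  have hsPn : isStratification s Pn := fun r hr => hs r hr.1
  have hagree : ∀ a, s a < n → (a ∈ M' ↔ a ∈ M) := by
    have hsplit := leastModel_lowerStratum isDefinite_reduct (hsPn.reduct (M := M)) n
    rw [← reduct_lowerStratum, lowerStratum_lowerStratum_succ, ← hM.eq_leastModel] at hsplit
    intro a ha
    exact ((Set.ext_iff.1 hsplit a).trans (and_iff_left ha)).symm
  have hreduct : reduct Pn M' = reduct Pn M :=
    reduct_congr fun r hr a ha => hagree a (((hs r hr.1).2 a ha).trans_le (Nat.lt_succ_iff.1 hr.2))
  rw [isStable, hreduct]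
  exact isLeastModel_leastModel isDefinite_reduct

lemma isStable_empty : isStable (∅ : Set α) ∅ := by
  simp [isStable, isLeastModel, isModel, reduct]

lemma exists_isStable_lowerStratum (hs : isStratification s P) (n : ℕ) :
    ∃ M, isStable M (lowerStratum P s n) := by
  induction n with
  | zero => exact ⟨∅, by simpa [lowerStratum] using isStable_empty⟩
  | succ n ih =>
    obtain ⟨M, hM⟩ := ih
    exact ⟨_, isStable_lowerStratum_succ hs hM⟩

end Stratified

/-- Every finite stratified ground normal logic program has at
least one stable model. -/
theorem finite_stratified_has_stable_model {α : Type} (P : Set (Rule α))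
    (hfin : P.Finite) (hstrat : isStratified P) :
    ∃ M : Set α, isStable M P := by
  obtain ⟨s, hs⟩ := hstrat
  obtain ⟨N, hN⟩ := (hfin.image fun r => s r.head).bddAbove
  obtain ⟨M, hM⟩ := exists_isStable_lowerStratum (P := P) hs (N + 1)
  rw [lowerStratum_eq_self fun r hr => Nat.lt_succ_of_le (hN ⟨r, hr, rfl⟩)] at hM
  exact ⟨M, hM⟩

end ASP
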